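/- Let Ŝ be the 2×2 real matrix (1/√(4+2√2))·[[1, 1+√2],[1+√2, -1]] and T̂ the diagonal matrix diag(1, i). Then the eigenvalues of Ŝ·T̂ are not roots of unity; in particular, Ŝ·T̂ has infinite multiplicative order, and the group generated by Ŝ and T̂ in GL(2,ℂ) is infinite. -/
import Mathlib


open Matrix Complex

/-- The matrix `Ŝ` of `PSU(2)₆` as a complex matrix. -/
noncomputable def Shat6 : Matrix (Fin 2) (Fin 2) ℂ :=
  ((1 / Real.sqrt (4 + 2 * Real.sqrt 2) : ℝ) : ℂ) •
    !![1, 1 + ((Real.sqrt 2 : ℝ) : ℂ); 1 + ((Real.sqrt 2 : ℝ) : ℂ), -1]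

/-- The matrix `T̂ = diag(1, i)`. -/
noncomputable def That6 : Matrix (Fin 2) (Fin 2) ℂ := !![1, 0; 0, Complex.I]

lemma hsC : ((Real.sqrt 2 : ℝ) : ℂ) ^ 2 = 2 := by
  exact_mod_cast Real.sq_sqrt (by norm_num : (0:ℝ) ≤ 2)

lemma hcC : ((1 / Real.sqrt (4 + 2 * Real.sqrt 2) : ℝ) : ℂ) ^ 2
    * (4 + 2 * ((Real.sqrt 2 : ℝ) : ℂ)) = 1 := by
  have h0 : (0:ℝ) ≤ 4 + 2 * Real.sqrt 2 := by positivity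
  have ha : Real.sqrt (4 + 2 * Real.sqrt 2) ≠ 0 := by positivity
  have : (1 / Real.sqrt (4 + 2 * Real.sqrt 2)) ^ 2 * (4 + 2 * Real.sqrt 2) = 1 := by
    rw [div_pow, one_pow, Real.sq_sqrt h0]
    field_simp
  exact_mod_cast this

lemma not_integral_74 : ¬ IsIntegral ℤ ((7/4 : ℂ)) := by
  intro h
  rw [show ((7/4:ℂ)) = algebraMap ℚ ℂ (7/4) by norm_num,
    isIntegral_algebraMap_iff (algebraMap ℚ ℂ).injective] at h
  obtain ⟨y, hy⟩ := IsIntegrallyClosed.isIntegral_iff.mp h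
  have hy' : (y : ℚ) = 7/4 := by exact_mod_cast hy
  have h4 : ((4 * y : ℤ) : ℚ) = 7 := by push_cast; linarith
  have : (4 * y : ℤ) = 7 := by exact_mod_cast h4
  omega

lemma aux_key (c s z : ℂ) (hs : s ^ 2 = 2) (hc : c ^ 2 * (4 + 2 * s) = 1)
    (h : z ^ 2 - c * (1 - I) * z - I = 0) {n : ℕ} (hn : 0 < n) (hzn : z ^ n = 1) : False := by
  have hzint : IsIntegral ℤ z := by
    refine ⟨Polynomial.X ^ n - Polynomial.C 1, Polynomial.monic_X_pow_sub_C 1 hn.ne', ?_⟩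
    simp [hzn]
  have h1 : z ^ 2 - I = c * (1 - I) * z := by linear_combination h
  have h2 : 2 * (z ^ 4 - 1) = I * z ^ 2 * (2 + s) := by
    linear_combination 2 * (z ^ 2 - I + c * (1 - I) * z) * h1 - I * z ^ 2 * (2 - s) * hc
      - 2 * I * c ^ 2 * z ^ 2 * hs + (2 * z ^ 2 * c ^ 2 - 2) * Complex.I_sq
  have h3 : 2 * (z ^ 8 + 1) = (1 - 2 * s) * z ^ 4 := by
    linear_combination ((z ^ 4 - 1) + I * z ^ 2 * (2 + s) / 2) * h2 - z ^ 4 / 2 * hs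
      + (2 * z ^ 4 + 2 * z ^ 4 * s + z ^ 4 * s ^ 2 / 2) * Complex.I_sq
  obtain ⟨u, hu, huint⟩ : ∃ u : ℂ, z ^ 4 * u = 1 ∧ IsIntegral ℤ u := by
    refine ⟨z ^ (4 * (n - 1)), ?_, hzint.pow _⟩
    rw [← pow_add, show 4 + 4 * (n - 1) = 4 * n by omega, pow_mul', hzn, one_pow]
  have hβ : 2 * (z ^ 4 + u) = 1 - 2 * s := by
    linear_combination u * h3 + (1 - 2 * s - 2 * z ^ 4) * hu
  have hβint : IsIntegral ℤ (z ^ 4 + u) := (hzint.pow 4).add huint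
  have h74 : (z ^ 4 + u) ^ 2 - (z ^ 4 + u) = 7 / 4 := by
    linear_combination ((2 * (z ^ 4 + u) - 1 - 2 * s) / 4) * hβ + hs
  exact not_integral_74 (h74 ▸ (hβint.pow 2).sub hβint)

lemma spec_eq (z : ℂ) (hz : z ∈ spectrum ℂ (Shat6 * That6)) :
    z ^ 2 - ((1 / Real.sqrt (4 + 2 * Real.sqrt 2) : ℝ) : ℂ) * (1 - I) * z - I = 0 := by
  rw [spectrum.mem_iff, Matrix.isUnit_iff_isUnit_det, isUnit_iff_ne_zero, not_not] at hz
  simp only [Shat6, That6, Matrix.det_fin_two, Matrix.sub_apply, Matrix.mul_apply,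
    Fin.sum_univ_two, Matrix.smul_apply, Matrix.cons_val_zero, Matrix.cons_val_one,
    Matrix.head_cons, Matrix.head_fin_const, Matrix.of_apply, Matrix.cons_val',
    Matrix.empty_val', Matrix.cons_val_fin_one, smul_eq_mul,
    (show ((0:Fin 2) = 1) ↔ False by decide), (show ((1:Fin 2) = 0) ↔ False by decide),
    if_false, if_true, Matrix.algebraMap_matrix_apply, Algebra.algebraMap_self,
    RingHom.id_apply] at hz
  linear_combination hz + I * hcC + I * ((1 / Real.sqrt (4 + 2 * Real.sqrt 2) : ℝ) : ℂ) ^ 2 * hsC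

lemma det_Shat6 : Shat6.det = -1 := by
  simp only [Shat6, Matrix.det_fin_two, Matrix.smul_apply, Matrix.cons_val_zero,
    Matrix.cons_val_one, Matrix.head_cons, Matrix.head_fin_const, Matrix.of_apply,
    Matrix.cons_val', Matrix.empty_val', Matrix.cons_val_fin_one, smul_eq_mul]
  linear_combination (-1 : ℂ) * hcC - ((1 / Real.sqrt (4 + 2 * Real.sqrt 2) : ℝ) : ℂ) ^ 2 * hsC

lemma det_That6 : That6.det = Complex.I := by
  simp [That6, Matrix.det_fin_two]

/-- The eigenvalues of `Ŝ·T̂` are not roots of unity; `Ŝ·T̂` has infinite order; and the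
group generated by `Ŝ` and `T̂` in `GL(2, ℂ)` is infinite. -/
theorem PSU2_6_infinite_image :
    (∀ z ∈ spectrum ℂ (Shat6 * That6), ¬ ∃ n : ℕ, 0 < n ∧ z ^ n = 1) ∧
    (∀ n : ℕ, 0 < n → (Shat6 * That6) ^ n ≠ 1) ∧
    ∃ gS gT : GL (Fin 2) ℂ, (gS : Matrix (Fin 2) (Fin 2) ℂ) = Shat6 ∧
      (gT : Matrix (Fin 2) (Fin 2) ℂ) = That6 ∧
      Infinite (Subgroup.closure ({gS, gT} : Set (GL (Fin 2) ℂ))) := by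
  have part1 : ∀ z ∈ spectrum ℂ (Shat6 * That6), ¬ ∃ n : ℕ, 0 < n ∧ z ^ n = 1 := by
    rintro z hz ⟨n, hn, hzn⟩
    exact aux_key _ _ z hsC hcC (spec_eq z hz) hn hzn
  have part2 : ∀ n : ℕ, 0 < n → (Shat6 * That6) ^ n ≠ 1 := by
    intro n hn hpow
    obtain ⟨z, hz⟩ := spectrum.nonempty_of_isAlgClosed_of_finiteDimensional ℂ (Shat6 * That6)
    have h1 : z ^ n ∈ spectrum ℂ ((Shat6 * That6) ^ n) :=
      spectrum.pow_image_subset _ n ⟨z, hz, rfl⟩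
    rw [hpow, spectrum.one_eq] at h1
    exact part1 z hz ⟨n, hn, h1⟩
  refine ⟨part1, part2, ?_⟩
  have hS : IsUnit Shat6 := by
    rw [Matrix.isUnit_iff_isUnit_det, det_Shat6, isUnit_iff_ne_zero]
    norm_num
  have hT : IsUnit That6 := by
    rw [Matrix.isUnit_iff_isUnit_det, det_That6, isUnit_iff_ne_zero]
    exact Complex.I_ne_zero
  refine ⟨hS.unit, hT.unit, hS.unit_spec, hT.unit_spec, ?_⟩
  set g : GL (Fin 2) ℂ := hS.unit * hT.unit with hg_def
  have hgmem : g ∈ Subgroup.closure ({hS.unit, hT.unit} : Set (GL (Fin 2) ℂ)) :=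
    mul_mem (Subgroup.subset_closure (Set.mem_insert _ _))
      (Subgroup.subset_closure (Set.mem_insert_of_mem _ rfl))
  have hfo : ¬ IsOfFinOrder g := by
    rw [isOfFinOrder_iff_pow_eq_one]
    rintro ⟨n, hn, hgn⟩
    apply part2 n hn
    have := congrArg (Units.val) hgn
    rw [Units.val_pow_eq_pow_val] at this
    simpa [hg_def, hS.unit_spec, hT.unit_spec] using this
  have hinj : Function.Injective fun m : ℤ =>
      (⟨g ^ m, Subgroup.zpow_mem _ hgmem m⟩ :
        Subgroup.closure ({hS.unit, hT.unit} : Set (GL (Fin 2) ℂ))) := by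
    intro a b hab
    exact injective_zpow_iff_not_isOfFinOrder.mpr hfo (congrArg Subtype.val hab)
  exact Infinite.of_injective _ hinj
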